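/- Propagation of the divergence-free constraint: if A : R × R^3 → R^3 is a smooth solution of ∂_t^2 A = ΔA, compactly supported in space, and div A(0,·) = 0 and div ∂_t A(0,·) = 0, then div A(t,·) = 0 for all t. -/

import Mathlib

noncomputable section

abbrev E3 := EuclideanSpace ℝ (Fin 3)

def pd (j : Fin 3) (f : E3 → ℝ) (x : E3) : ℝ :=
  fderiv ℝ f x (EuclideanSpace.single j 1)

/-- Spatial divergence. -/
def div3 (A : E3 → E3) (x : E3) : ℝ := ∑ i : Fin 3, pd i (fun y => A y i) x

namespace S10
open MeasureTheory Set Real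

abbrev sm : WithTop ℕ∞ := (⊤ : ℕ∞)

lemma sm_add_one : sm + 1 ≤ sm := by
  simp [sm]

lemma one_le_sm : sm ≠ 0 := by
  simp [sm]


def Dv (v : ℝ × E3) (F : ℝ × E3 → ℝ) (p : ℝ × E3) : ℝ := fderiv ℝ F p v

def tau : ℝ × E3 := (1, 0)
def sg (j : Fin 3) : ℝ × E3 := (0, EuclideanSpace.single j 1)

variable {F G : ℝ × E3 → ℝ} {v w : ℝ × E3}

lemma contDiff_Dv (hF : ContDiff ℝ sm F) (v : ℝ × E3) : ContDiff ℝ sm (Dv v F) := by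
  have : Dv v F = fun p => (ContinuousLinearMap.apply ℝ ℝ v) (fderiv ℝ F p) := rfl
  rw [this]
  exact (ContinuousLinearMap.apply ℝ ℝ v).contDiff.comp (hF.fderiv_right sm_add_one)

lemma hasDerivAt_slice (hF : ContDiff ℝ sm F) (t : ℝ) (x : E3) :
    HasDerivAt (fun s => F (s, x)) (Dv tau F (t, x)) t := by
  have hp : HasDerivAt (fun s : ℝ => (s, x)) ((1 : ℝ), (0 : E3)) t :=
    (hasDerivAt_id t).prodMk (hasDerivAt_const t x)
  exact ((hF.differentiable one_le_sm (t, x)).hasFDerivAt).comp_hasDerivAt t hp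

lemma deriv_slice (hF : ContDiff ℝ sm F) (t : ℝ) (x : E3) :
    deriv (fun s => F (s, x)) t = Dv tau F (t, x) :=
  (hasDerivAt_slice hF t x).deriv

lemma hasFDerivAt_sliceX (hF : ContDiff ℝ sm F) (t : ℝ) (x : E3) :
    HasFDerivAt (fun y => F (t, y))
      ((fderiv ℝ F (t, x)).comp (((0 : E3 →L[ℝ] ℝ)).prod (ContinuousLinearMap.id ℝ E3))) x := by
  have hp : HasFDerivAt (fun y : E3 => ((t : ℝ), y))
      (((0 : E3 →L[ℝ] ℝ)).prod (ContinuousLinearMap.id ℝ E3)) x :=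
    (hasFDerivAt_const t x).prodMk (hasFDerivAt_id x)
  exact ((hF.differentiable one_le_sm (t, x)).hasFDerivAt).comp x hp

lemma pd_slice (hF : ContDiff ℝ sm F) (j : Fin 3) (t : ℝ) (x : E3) :
    pd j (fun y => F (t, y)) x = Dv (sg j) F (t, x) := by
  rw [pd, (hasFDerivAt_sliceX hF t x).fderiv]
  simp [Dv, sg]

lemma hasFDerivAt_Dv (hF : ContDiff ℝ sm F) (p : ℝ × E3) :
    HasFDerivAt (Dv w F)
      ((ContinuousLinearMap.apply ℝ ℝ w).comp (fderiv ℝ (fderiv ℝ F) p)) p := by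
  have hd : HasFDerivAt (fderiv ℝ F) (fderiv ℝ (fderiv ℝ F) p) p :=
    (((hF.fderiv_right sm_add_one).differentiable one_le_sm) p).hasFDerivAt
  exact (ContinuousLinearMap.apply ℝ ℝ w).hasFDerivAt.comp p hd

lemma Dv_Dv (hF : ContDiff ℝ sm F) (p : ℝ × E3) :
    Dv v (Dv w F) p = fderiv ℝ (fderiv ℝ F) p v w := by
  have := (hasFDerivAt_Dv (w := w) hF p).fderiv
  simp only [Dv, this]; rfl

lemma Dv_comm (hF : ContDiff ℝ sm F) : Dv v (Dv w F) = Dv w (Dv v F) := by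
  funext p
  rw [Dv_Dv hF, Dv_Dv hF]
  exact second_derivative_symmetric (fun y => ((hF.differentiable one_le_sm) y).hasFDerivAt)
    ((((hF.fderiv_right sm_add_one).differentiable one_le_sm) p).hasFDerivAt) v w

lemma Dv_sum {ι : Type*} (s : Finset ι) (G : ι → ℝ × E3 → ℝ)
    (hG : ∀ i, ContDiff ℝ sm (G i)) (p : ℝ × E3) :
    Dv v (fun q => ∑ i ∈ s, G i q) p = ∑ i ∈ s, Dv v (G i) p := by
  rw [Dv, fderiv_fun_sum (fun i _ => ((hG i).differentiable one_le_sm) p)]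
  simp [Dv]

lemma Dv_mul (hF : ContDiff ℝ sm F) (hG : ContDiff ℝ sm G) (p : ℝ × E3) :
    Dv v (fun q => F q * G q) p = Dv v F p * G p + F p * Dv v G p := by
  rw [Dv, fderiv_fun_mul ((hF.differentiable one_le_sm) p) ((hG.differentiable one_le_sm) p)]
  simp [Dv]; ring

lemma Dv_neg (p : ℝ × E3) : Dv (-v) F p = -Dv v F p := by
  simp [Dv]

lemma Dv_comp_clm (hF : ContDiff ℝ sm F) (L : ℝ × E3 →L[ℝ] ℝ × E3) (p : ℝ × E3) :
    Dv v (F ∘ L) p = Dv (L v) F (L p) := by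
  have h := (((hF.differentiable one_le_sm) (L p)).hasFDerivAt).comp p L.hasFDerivAt
  rw [Dv, h.fderiv]; rfl



lemma div3_eq_zero_of_zero_nhds {V : E3 → E3} {x : E3} {ρ : ℝ}
    (hρ : ∀ y : E3, ρ < ‖y‖ → V y = 0) (hx : ρ < ‖x‖) : div3 V x = 0 := by
  have hev : ∀ j : Fin 3, (fun y => V y j) =ᶠ[nhds x] (fun _ => 0) := by
    intro j
    have hopen : IsOpen {y : E3 | ρ < ‖y‖} := isOpen_lt continuous_const continuous_norm
    filter_upwards [hopen.mem_nhds hx] with y hy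
    simp [hρ y hy]
  have : ∀ j : Fin 3, pd j (fun y => V y j) x = 0 := by
    intro j
    rw [pd, Filter.EventuallyEq.fderiv_eq (hev j)]
    simp
  simp [div3, this]

lemma integral_div3_eq_zero (V : E3 → E3) (hV : ∀ j, ContDiff ℝ sm fun x => V x j)
    (ρ : ℝ) (hρ : ∀ x : E3, ρ < ‖x‖ → V x = 0) (hρ0 : 0 ≤ ρ) :
    ∫ x, div3 V x = 0 := by
  classical
  set ψ : (Fin 3 → ℝ) → E3 := fun y => (EuclideanSpace.equiv (Fin 3) ℝ).symm y with hψ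
  have hψsingle : ∀ j : Fin 3, ψ (Pi.single j 1) = EuclideanSpace.single j 1 := by
    intro j; ext k; simp [ψ, EuclideanSpace.single_apply, Pi.single_apply]
  have hnorm : ∀ (y : Fin 3 → ℝ) (i : Fin 3), |y i| ≤ ‖ψ y‖ := by
    intro y i
    rw [EuclideanSpace.norm_eq]
    have h1 : |y i| = Real.sqrt ((y i)^2) := by
      rw [Real.sqrt_sq_eq_abs]
    rw [h1]
    apply Real.sqrt_le_sqrt
    have : ∀ k : Fin 3, (0:ℝ) ≤ ‖(ψ y) k‖^2 := fun k => sq_nonneg _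
    calc (y i)^2 = ‖(ψ y) i‖^2 := by simp [ψ, sq_abs]
    _ ≤ ∑ k, ‖(ψ y) k‖^2 := Finset.single_le_sum (fun k _ => this k) (Finset.mem_univ i)
  -- transfer the integral to the pi type
  have hMP := (EuclideanSpace.volume_preserving_symm_measurableEquiv_toLp (Fin 3)).symm
  have hψm : ∀ y, (MeasurableEquiv.toLp 2 (Fin 3 → ℝ)) y = ψ y := fun y => rfl
  have htrans : ∫ x, div3 V x = ∫ y : Fin 3 → ℝ, div3 V (ψ y) := by
    rw [← hMP.integral_comp (MeasurableEquiv.toLp 2 (Fin 3 → ℝ)).measurableEmbedding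
      (fun x => div3 V x)]
    rfl
  rw [htrans]
  -- the box
  set a : Fin 3 → ℝ := fun _ => -(ρ+1) with ha
  set b : Fin 3 → ℝ := fun _ => (ρ+1) with hb
  have hle : a ≤ b := by intro i; simp [a, b]; linarith
  set f : Fin 3 → (Fin 3 → ℝ) → ℝ := fun j y => V (ψ y) j with hf
  set f' : Fin 3 → (Fin 3 → ℝ) → (Fin 3 → ℝ) →L[ℝ] ℝ :=
    fun j y => (fderiv ℝ (fun x => V x j) (ψ y)).comp
      ((EuclideanSpace.equiv (Fin 3) ℝ).symm : (Fin 3 → ℝ) →L[ℝ] E3) with hf'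
  have hψCLM : ∀ y, ((EuclideanSpace.equiv (Fin 3) ℝ).symm :
      (Fin 3 → ℝ) →L[ℝ] E3) y = ψ y := fun y => rfl
  have hdiveq : ∀ y : Fin 3 → ℝ, (∑ i, f' i y (Pi.single i 1)) = div3 V (ψ y) := by
    intro y
    rw [div3]
    refine Finset.sum_congr rfl fun i _ => ?_
    rw [hf']
    simp only [ContinuousLinearMap.comp_apply]
    rw [hψCLM, hψsingle, pd]
  have hKey := MeasureTheory.integral_divergence_of_hasFDerivAt_off_countable'
    a b hle f f' ∅ Set.countable_empty
    (fun i => ((hV i).continuous.comp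
      (EuclideanSpace.equiv (Fin 3) ℝ).symm.continuous).continuousOn)
    (fun x _ i => (((hV i).differentiable one_le_sm (ψ x)).hasFDerivAt).comp x
      ((EuclideanSpace.equiv (Fin 3) ℝ).symm :
        (Fin 3 → ℝ) →L[ℝ] E3).hasFDerivAt)
    (by
      apply ContinuousOn.integrableOn_compact isCompact_Icc
      apply Continuous.continuousOn
      have : Continuous fun y : Fin 3 → ℝ => div3 V (ψ y) := by
        have hc : Continuous fun x : E3 => div3 V x := by
          apply continuous_finset_sum
          intro i _
          have : Continuous (fderiv ℝ fun y => V y i) :=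
            ((hV i).fderiv_right (m := sm) sm_add_one).continuous
          exact (ContinuousLinearMap.apply ℝ ℝ (EuclideanSpace.single i 1)).continuous.comp this
        exact hc.comp (EuclideanSpace.equiv (Fin 3) ℝ).symm.continuous
      exact Continuous.congr this (fun y => (hdiveq y).symm))
  -- faces vanish
  have hfaces : ∀ (i : Fin 3) (c : ℝ), |c| = ρ + 1 →
      ∀ x : Fin 2 → ℝ, f i (Fin.insertNth (α := fun _ => ℝ) i c x) = 0 := by
    intro i c hc x
    have h1 : |(Fin.insertNth (α := fun _ => ℝ) i c x) i| = ρ + 1 := by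
      rw [Fin.insertNth_apply_same]; exact hc
    have h2 : ρ < ‖ψ (Fin.insertNth (α := fun _ => ℝ) i c x)‖ :=
      lt_of_lt_of_le (by linarith) (h1 ▸ hnorm _ i)
    simp [hf, hρ _ h2]
  have hbig : (∫ y : Fin 3 → ℝ, div3 V (ψ y)) = ∫ y in Set.Icc a b, div3 V (ψ y) := by
    refine (MeasureTheory.setIntegral_eq_integral_of_forall_compl_eq_zero ?_).symm
    intro y hy
    rw [Set.mem_Icc] at hy
    have hex : ∃ i, y i < a i ∨ b i < y i := by
      by_contra h
      push_neg at h
      exact hy ⟨fun i => (h i).1, fun i => (h i).2⟩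
    obtain ⟨i, hi⟩ := hex
    have : ρ < |y i| := by
      rcases hi with h | h
      · rw [abs_of_neg (by simp [a] at h; linarith)]
        simp [a] at h; linarith
      · rw [abs_of_pos (by simp [b] at h; linarith)]
        simp [b] at h; linarith
    exact div3_eq_zero_of_zero_nhds hρ (lt_of_lt_of_le this (hnorm y i))
  rw [hbig]
  rw [show (∫ y in Set.Icc a b, div3 V (ψ y)) = ∫ y in Set.Icc a b, ∑ i, f' i y (Pi.single i 1) by
    exact MeasureTheory.setIntegral_congr_fun measurableSet_Icc fun y _ => (hdiveq y).symm]
  rw [hKey]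
  refine Finset.sum_eq_zero fun i _ => ?_
  have hfront : ∀ x : Fin 2 → ℝ, f i (Fin.insertNth (α := fun _ => ℝ) i (b i) x) = 0 :=
    hfaces i (b i) (by simp [b]; linarith) 
  have hback : ∀ x : Fin 2 → ℝ, f i (Fin.insertNth (α := fun _ => ℝ) i (a i) x) = 0 :=
    hfaces i (a i) (by simp [a]; rw [abs_of_neg (by linarith)]; ring)
  simp only [hfront, hback]
  simp



lemma expNegInvGlue_monotone : Monotone expNegInvGlue := by
  intro x y hxy
  rcases le_or_gt x 0 with hx | hx
  · rw [expNegInvGlue.zero_of_nonpos hx]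
    exact expNegInvGlue.nonneg y
  · have hy : 0 < y := lt_of_lt_of_le hx hxy
    rw [expNegInvGlue, expNegInvGlue, if_neg (not_le.2 hx), if_neg (not_le.2 hy)]
    apply Real.exp_le_exp.2
    have : y⁻¹ ≤ x⁻¹ := inv_anti₀ hx hxy
    linarith

lemma smoothTransition_monotone : Monotone Real.smoothTransition := by
  intro x y hxy
  unfold Real.smoothTransition
  set g := expNegInvGlue
  have hgx : 0 ≤ g x := expNegInvGlue.nonneg x
  have hgy : 0 ≤ g y := expNegInvGlue.nonneg y
  have hdx : 0 < g x + g (1 - x) := Real.smoothTransition.pos_denom x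
  have hdy : 0 < g y + g (1 - y) := Real.smoothTransition.pos_denom y
  rw [div_le_div_iff₀ hdx hdy]
  have h1 : g x ≤ g y := expNegInvGlue_monotone hxy
  have h2 : g (1 - y) ≤ g (1 - x) := expNegInvGlue_monotone (by linarith)
  have hmm : g x * g (1 - y) ≤ g y * g (1 - x) :=
    mul_le_mul h1 h2 (expNegInvGlue.nonneg _) hgy
  nlinarith [hmm]

lemma deriv_nonneg_of_monotone {f : ℝ → ℝ} (hm : Monotone f) (x : ℝ) : 0 ≤ deriv f x := by
  by_cases h : DifferentiableAt ℝ f x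
  · have := h.hasDerivAt
    rw [hasDerivAt_iff_tendsto_slope] at this
    have hsub : Set.Ioi x ⊆ {x}ᶜ := fun y hy => ne_of_gt hy
    have hT := this.mono_left (nhdsWithin_mono x hsub)
    have hev : ∀ᶠ y in nhdsWithin x (Set.Ioi x), 0 ≤ slope f x y := by
      filter_upwards [self_mem_nhdsWithin] with y hy
      have hxy : x < y := hy
      have : f x ≤ f y := hm hxy.le
      rw [slope_def_field]
      apply div_nonneg (by linarith) (by linarith)
    exact ge_of_tendsto hT hev
  · rw [deriv_zero_of_not_differentiableAt h]

-- the weight function ψ(x) = sqrt (1 + ∑ x i ^ 2)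
def qf (x : E3) : ℝ := 1 + ∑ i, (x i)^2

lemma qf_pos (x : E3) : 0 < qf x := by
  have : (0:ℝ) ≤ ∑ i, (x i)^2 := Finset.sum_nonneg fun i _ => sq_nonneg _
  rw [qf]; linarith

lemma hasFDerivAt_qf (x : E3) :
    HasFDerivAt qf (∑ i, (2 * x i) • (EuclideanSpace.proj i : E3 →L[ℝ] ℝ)) x := by
  have h : HasFDerivAt (fun y : E3 => ∑ i, (y i)^2)
      (∑ i, (2 * x i) • (EuclideanSpace.proj i : E3 →L[ℝ] ℝ)) x := by
    apply HasFDerivAt.fun_sum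
    intro i _
    have hp : HasFDerivAt (fun y : E3 => y i) (EuclideanSpace.proj i : E3 →L[ℝ] ℝ) x :=
      (EuclideanSpace.proj i : E3 →L[ℝ] ℝ).hasFDerivAt
    have := (hasDerivAt_pow 2 (x i)).comp_hasFDerivAt x hp
    simpa [pow_one, mul_comm, Function.comp_def] using this
  exact h.const_add 1

def psi (x : E3) : ℝ := Real.sqrt (qf x)

lemma psi_pos (x : E3) : 0 < psi x := Real.sqrt_pos.2 (qf_pos x)

lemma hasFDerivAt_psi (x : E3) :
    HasFDerivAt psi ((1 / (2 * psi x)) •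
      (∑ i, (2 * x i) • (EuclideanSpace.proj i : E3 →L[ℝ] ℝ))) x := by
  have h1 : HasDerivAt Real.sqrt (1 / (2 * Real.sqrt (qf x))) (qf x) :=
    Real.hasDerivAt_sqrt (ne_of_gt (qf_pos x))
  exact h1.comp_hasFDerivAt x (hasFDerivAt_qf x)

lemma pd_psi (j : Fin 3) (x : E3) : pd j psi x = x j / psi x := by
  rw [pd, (hasFDerivAt_psi x).fderiv]
  simp only [ContinuousLinearMap.smul_apply, ContinuousLinearMap.sum_apply, smul_eq_mul]
  rw [Finset.sum_eq_single j]
  · have hne : psi x ≠ 0 := (psi_pos x).ne'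
    simp [EuclideanSpace.single_apply]
    field_simp
  · intro k _ hk
    simp [EuclideanSpace.single_apply, hk]
  · simp

lemma sum_pd_psi_sq_le (x : E3) : ∑ j, (pd j psi x)^2 ≤ 1 := by
  have h : ∑ j, (pd j psi x)^2 = (∑ j, (x j)^2) / qf x := by
    rw [Finset.sum_div]
    refine Finset.sum_congr rfl fun j _ => ?_
    rw [pd_psi, div_pow, psi, Real.sq_sqrt (qf_pos x).le]
  rw [h, div_le_one (qf_pos x)]
  rw [qf]; linarith

lemma norm_le_psi (x : E3) : ‖x‖ ≤ psi x := by
  rw [EuclideanSpace.norm_eq, psi]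
  apply Real.sqrt_le_sqrt
  rw [qf]
  have : ∀ i : Fin 3, ‖x i‖^2 = (x i)^2 := fun i => sq_abs _
  simp only [this]
  linarith

lemma contDiff_psi : ContDiff ℝ sm psi := by
  rw [contDiff_iff_contDiffAt]
  intro x
  have hq : ContDiffAt ℝ sm qf x := by
    apply ContDiffAt.add contDiffAt_const
    exact ContDiffAt.sum fun i _ =>
      ((EuclideanSpace.proj i : E3 →L[ℝ] ℝ).contDiff.pow 2).contDiffAt
  exact (Real.contDiffAt_sqrt (ne_of_gt (qf_pos x))).comp x hq


-- extra Dv toolkit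
variable {F G : ℝ × E3 → ℝ} {v : ℝ × E3}

lemma Dv_add (hF : ContDiff ℝ sm F) (hG : ContDiff ℝ sm G) (p : ℝ × E3) :
    Dv v (fun q => F q + G q) p = Dv v F p + Dv v G p := by
  rw [Dv, fderiv_fun_add ((hF.differentiable one_le_sm) p) ((hG.differentiable one_le_sm) p)]
  simp [Dv]

lemma Dv_sq (hF : ContDiff ℝ sm F) (p : ℝ × E3) :
    Dv v (fun q => F q ^ 2) p = 2 * F p * Dv v F p := by
  have : (fun q => F q ^ 2) = fun q => F q * F q := by funext q; ring
  rw [this, Dv_mul hF hF]; ring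

lemma Dv_const_mul (hF : ContDiff ℝ sm F) (c : ℝ) (p : ℝ × E3) :
    Dv v (fun q => c * F q) p = c * Dv v F p := by
  rw [Dv, fderiv_const_mul ((hF.differentiable one_le_sm) p)]
  simp [Dv]

-- The energy setup
def th : ℝ → ℝ := Real.smoothTransition

lemma contDiff_th : ContDiff ℝ sm th := Real.smoothTransition.contDiff

lemma deriv_th_nonneg (r : ℝ) : 0 ≤ deriv th r :=
  deriv_nonneg_of_monotone smoothTransition_monotone r

def hfn (R : ℝ) : ℝ × E3 → ℝ := fun p => R + 1 - p.1 - psi p.2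

lemma contDiff_hfn (R : ℝ) : ContDiff ℝ sm (hfn R) := by
  apply ContDiff.sub
  · exact ContDiff.sub contDiff_const contDiff_fst
  · exact contDiff_psi.comp contDiff_snd

def wfn (R : ℝ) : ℝ × E3 → ℝ := fun p => th (hfn R p)

lemma contDiff_wfn (R : ℝ) : ContDiff ℝ sm (wfn R) := contDiff_th.comp (contDiff_hfn R)

lemma wfn_nonneg (R : ℝ) (p : ℝ × E3) : 0 ≤ wfn R p := Real.smoothTransition.nonneg _

lemma Dv_wfn (R : ℝ) (v : ℝ × E3) (p : ℝ × E3) :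
    Dv v (wfn R) p = deriv th (hfn R p) * Dv v (hfn R) p := by
  have hth : HasDerivAt th (deriv th (hfn R p)) (hfn R p) :=
    ((contDiff_th.differentiable one_le_sm) (hfn R p)).hasDerivAt
  have hh : HasFDerivAt (hfn R) (fderiv ℝ (hfn R) p) p :=
    (((contDiff_hfn R).differentiable one_le_sm) p).hasFDerivAt
  have hc := (hth.comp_hasFDerivAt p hh).fderiv
  rw [Dv, show wfn R = th ∘ hfn R from rfl, hc]
  simp [Dv]

lemma hasFDerivAt_hfn (R : ℝ) (p : ℝ × E3) :
    HasFDerivAt (hfn R)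
      (-(ContinuousLinearMap.fst ℝ ℝ E3) -
        (fderiv ℝ psi p.2).comp (ContinuousLinearMap.snd ℝ ℝ E3)) p := by
  have h1 : HasFDerivAt (fun q : ℝ × E3 => R + 1 - q.1)
      (-(ContinuousLinearMap.fst ℝ ℝ E3)) p := by
    simpa using (ContinuousLinearMap.fst ℝ ℝ E3).hasFDerivAt.const_sub (R+1)
  have h2 : HasFDerivAt (fun q : ℝ × E3 => psi q.2)
      ((fderiv ℝ psi p.2).comp (ContinuousLinearMap.snd ℝ ℝ E3)) p :=
    ((contDiff_psi.differentiable one_le_sm p.2).hasFDerivAt).comp p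
      (ContinuousLinearMap.snd ℝ ℝ E3).hasFDerivAt
  exact h1.sub h2

lemma Dv_hfn_tau (R : ℝ) (p : ℝ × E3) : Dv tau (hfn R) p = -1 := by
  rw [Dv, (hasFDerivAt_hfn R p).fderiv]
  simp [tau]

lemma Dv_hfn_sg (R : ℝ) (j : Fin 3) (p : ℝ × E3) :
    Dv (sg j) (hfn R) p = -(pd j psi p.2) := by
  rw [Dv, (hasFDerivAt_hfn R p).fderiv]
  simp [sg, pd]

section Energy

variable {u : ℝ × E3 → ℝ}

def efn (u : ℝ × E3 → ℝ) : ℝ × E3 → ℝ :=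
  fun p => Dv tau u p ^ 2 + ∑ j, Dv (sg j) u p ^ 2

def Gfn (u : ℝ × E3 → ℝ) (j : Fin 3) : ℝ × E3 → ℝ :=
  fun p => 2 * (Dv tau u p * Dv (sg j) u p)

def ffn (R : ℝ) (u : ℝ × E3 → ℝ) : ℝ × E3 → ℝ := fun p => wfn R p * efn u p

def wG (R : ℝ) (u : ℝ × E3 → ℝ) (j : Fin 3) : ℝ × E3 → ℝ :=
  fun p => wfn R p * Gfn u j p

lemma efn_def (u : ℝ × E3 → ℝ) :
    efn u = fun p => Dv tau u p ^ 2 + ∑ j, Dv (sg j) u p ^ 2 := rfl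

lemma Gfn_def (u : ℝ × E3 → ℝ) (j : Fin 3) :
    Gfn u j = fun p => 2 * (Dv tau u p * Dv (sg j) u p) := rfl

lemma ffn_def (R : ℝ) (u : ℝ × E3 → ℝ) : ffn R u = fun p => wfn R p * efn u p := rfl

lemma wG_def (R : ℝ) (u : ℝ × E3 → ℝ) (j : Fin 3) :
    wG R u j = fun p => wfn R p * Gfn u j p := rfl

lemma contDiff_efn (hu : ContDiff ℝ sm u) : ContDiff ℝ sm (efn u) := by
  apply ContDiff.add
  · exact (contDiff_Dv hu tau).pow 2
  · exact ContDiff.sum fun j _ => (contDiff_Dv hu (sg j)).pow 2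

lemma efn_nonneg (u : ℝ × E3 → ℝ) (p : ℝ × E3) : 0 ≤ efn u p := by
  have : (0:ℝ) ≤ ∑ j, Dv (sg j) u p ^ 2 := Finset.sum_nonneg fun j _ => sq_nonneg _
  have h2 := sq_nonneg (Dv tau u p)
  rw [efn]; linarith

lemma contDiff_Gfn (hu : ContDiff ℝ sm u) (j : Fin 3) : ContDiff ℝ sm (Gfn u j) :=
  contDiff_const.mul ((contDiff_Dv hu tau).mul (contDiff_Dv hu (sg j)))

lemma contDiff_ffn (hu : ContDiff ℝ sm u) (R : ℝ) : ContDiff ℝ sm (ffn R u) :=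
  (contDiff_wfn R).mul (contDiff_efn hu)

lemma contDiff_wG (hu : ContDiff ℝ sm u) (R : ℝ) (j : Fin 3) : ContDiff ℝ sm (wG R u j) :=
  (contDiff_wfn R).mul (contDiff_Gfn hu j)

lemma Dv_efn (hu : ContDiff ℝ sm u) (v : ℝ × E3) (p : ℝ × E3) :
    Dv v (efn u) p = 2 * Dv tau u p * Dv v (Dv tau u) p
      + ∑ j, 2 * Dv (sg j) u p * Dv v (Dv (sg j) u) p := by
  rw [efn_def u, Dv_add ((contDiff_Dv hu tau).pow 2)
    (ContDiff.sum fun j _ => (contDiff_Dv hu (sg j)).pow 2)]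
  rw [Dv_sq (contDiff_Dv hu tau)]
  rw [Dv_sum Finset.univ _ (fun j => (contDiff_Dv hu (sg j)).pow 2) p]
  congr 1
  refine Finset.sum_congr rfl fun j _ => ?_
  rw [Dv_sq (contDiff_Dv hu (sg j))]

lemma Dv_Gfn (hu : ContDiff ℝ sm u) (j : Fin 3) (v : ℝ × E3) (p : ℝ × E3) :
    Dv v (Gfn u j) p = 2 * (Dv v (Dv tau u) p * Dv (sg j) u p
      + Dv tau u p * Dv v (Dv (sg j) u) p) := by
  rw [Gfn_def u j, Dv_const_mul ((contDiff_Dv hu tau).mul (contDiff_Dv hu (sg j)))]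
  rw [Dv_mul (contDiff_Dv hu tau) (contDiff_Dv hu (sg j))]

/-- The key pointwise identity for the energy method. -/
lemma key_identity (hu : ContDiff ℝ sm u)
    (hwave : ∀ p, Dv tau (Dv tau u) p = ∑ j, Dv (sg j) (Dv (sg j) u) p)
    (R : ℝ) (p : ℝ × E3) :
    Dv tau (ffn R u) p = (∑ j, Dv (sg j) (wG R u j) p)
      + deriv th (hfn R p) * ((∑ j, pd j psi p.2 * Gfn u j p) - efn u p) := by
  have hcomm : ∀ j, Dv tau (Dv (sg j) u) = Dv (sg j) (Dv tau u) := fun j => Dv_comm hu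
  have e1 : Dv tau (ffn R u) p = Dv tau (wfn R) p * efn u p + wfn R p * Dv tau (efn u) p := by
    rw [ffn_def R u, Dv_mul (contDiff_wfn R) (contDiff_efn hu)]
  have e2 : ∀ j, Dv (sg j) (wG R u j) p
      = Dv (sg j) (wfn R) p * Gfn u j p + wfn R p * Dv (sg j) (Gfn u j) p := by
    intro j
    rw [wG_def R u j, Dv_mul (contDiff_wfn R) (contDiff_Gfn hu j)]
  have e3 : Dv tau (efn u) p = ∑ j, Dv (sg j) (Gfn u j) p := by
    rw [Dv_efn hu, hwave p]
    have hG : ∀ j, Dv (sg j) (Gfn u j) p = 2 * (Dv (sg j) (Dv tau u) p * Dv (sg j) u p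
        + Dv tau u p * Dv (sg j) (Dv (sg j) u) p) := fun j => Dv_Gfn hu j _ p
    simp only [hG, hcomm]
    rw [Finset.mul_sum, ← Finset.sum_add_distrib]
    exact Finset.sum_congr rfl fun j _ => by ring
  have e4 : Dv tau (wfn R) p = -(deriv th (hfn R p)) := by
    rw [Dv_wfn, Dv_hfn_tau]; ring
  have e5 : ∀ j, Dv (sg j) (wfn R) p = -(deriv th (hfn R p)) * pd j psi p.2 := by
    intro j; rw [Dv_wfn, Dv_hfn_sg]; ring
  rw [e1, e3, e4]
  have hsum : ∑ j, Dv (sg j) (wG R u j) p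
      = (-(deriv th (hfn R p))) * (∑ j, pd j psi p.2 * Gfn u j p)
        + wfn R p * ∑ j, Dv (sg j) (Gfn u j) p := by
    rw [Finset.mul_sum, Finset.mul_sum, ← Finset.sum_add_distrib]
    exact Finset.sum_congr rfl fun j _ => by rw [e2 j, e5 j]; ring
  rw [hsum]
  ring

/-- The remainder term is nonpositive. -/
lemma remainder_nonpos (u : ℝ × E3 → ℝ) (R : ℝ) (p : ℝ × E3) :
    deriv th (hfn R p) * ((∑ j, pd j psi p.2 * Gfn u j p) - efn u p) ≤ 0 := by
  apply mul_nonpos_of_nonneg_of_nonpos (deriv_th_nonneg _)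
  rw [sub_nonpos]
  simp only [efn]
  have hterm : ∀ j : Fin 3, pd j psi p.2 * Gfn u j p
      ≤ (pd j psi p.2)^2 * (Dv tau u p)^2 + (Dv (sg j) u p)^2 := by
    intro j
    rw [Gfn]
    nlinarith [sq_nonneg (pd j psi p.2 * Dv tau u p - Dv (sg j) u p)]
  calc ∑ j, pd j psi p.2 * Gfn u j p
      ≤ ∑ j, ((pd j psi p.2)^2 * (Dv tau u p)^2 + (Dv (sg j) u p)^2) :=
        Finset.sum_le_sum fun j _ => hterm j
    _ = (∑ j, (pd j psi p.2)^2) * (Dv tau u p)^2 + ∑ j, (Dv (sg j) u p)^2 := by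
        rw [Finset.sum_add_distrib, Finset.sum_mul]
    _ ≤ Dv tau u p ^ 2 + ∑ j, Dv (sg j) u p ^ 2 := by
        have h1 := sum_pd_psi_sq_le p.2
        have h2 := sq_nonneg (Dv tau u p)
        nlinarith

end Energy

section Energy2

variable {u : ℝ × E3 → ℝ}

lemma wfn_zero {R : ℝ} {p : ℝ × E3} (hp : hfn R p ≤ 0) : wfn R p = 0 :=
  Real.smoothTransition.zero_of_nonpos hp

lemma hfn_nonpos {R : ℝ} {p : ℝ × E3} (h1 : -1 ≤ p.1) (h2 : R + 2 ≤ ‖p.2‖) :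
    hfn R p ≤ 0 := by
  have := norm_le_psi p.2
  simp only [hfn]
  linarith

lemma ffn_zero_far {R : ℝ} {p : ℝ × E3} (h1 : -1 ≤ p.1) (h2 : R + 2 ≤ ‖p.2‖) :
    ffn R u p = 0 := by
  simp only [ffn_def]
  rw [wfn_zero (hfn_nonpos h1 h2), zero_mul]

lemma Dv_ffn_zero_far (R : ℝ) (v : ℝ × E3) {p : ℝ × E3}
    (h1 : -1 < p.1) (h2 : R + 2 < ‖p.2‖) : Dv v (ffn R u) p = 0 := by
  have hopen : IsOpen {q : ℝ × E3 | -1 < q.1 ∧ R + 2 < ‖q.2‖} :=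
    (isOpen_lt continuous_const continuous_fst).inter
      (isOpen_lt continuous_const (continuous_norm.comp continuous_snd))
  have hev : ffn R u =ᶠ[nhds p] (fun _ => 0) := by
    filter_upwards [hopen.mem_nhds ⟨h1, h2⟩] with q hq
    exact ffn_zero_far hq.1.le hq.2.le
  rw [Dv, hev.fderiv_eq]
  simp

lemma continuous_slice {H : ℝ × E3 → ℝ} (hH : ContDiff ℝ sm H) (s : ℝ) :
    Continuous fun x => H (s, x) :=
  hH.continuous.comp (continuous_const.prodMk continuous_id)

lemma hasDerivAt_En (hu : ContDiff ℝ sm u) (R : ℝ) {s : ℝ} (hs : -1 < s) :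
    HasDerivAt (fun t => ∫ x, ffn R u (t, x)) (∫ x, Dv tau (ffn R u) (s, x)) s := by
  classical
  set K := Metric.closedBall (0:E3) (R+2) with hK
  have hKc : IsCompact K := isCompact_closedBall _ _
  have hKm : MeasurableSet K := measurableSet_closedBall
  have hnotK : ∀ x : E3, x ∉ K → R + 2 < ‖x‖ := by
    intro x hx
    simpa [hK, Metric.mem_closedBall, dist_zero_right, not_le] using hx
  set ε := (s+1)/2 with hε
  have hεpos : 0 < ε := by rw [hε]; linarith
  have htgt : ∀ t ∈ Metric.ball s ε, -1 < t := by
    intro t ht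
    rw [Metric.mem_ball, Real.dist_eq, abs_lt] at ht
    rw [hε] at ht
    linarith [ht.1]
  have hsm_f : ContDiff ℝ sm (ffn R u) := contDiff_ffn hu R
  have hg : Continuous (Dv tau (ffn R u)) := (contDiff_Dv hsm_f tau).continuous
  have hC : IsCompact ((Set.Icc (s-ε) (s+ε)) ×ˢ K) := isCompact_Icc.prod hKc
  obtain ⟨M, hM⟩ := hC.exists_bound_of_continuousOn hg.continuousOn
  have key := hasDerivAt_integral_of_dominated_loc_of_deriv_le (μ := volume)
    (F := fun t x => ffn R u (t, x)) (F' := fun t x => Dv tau (ffn R u) (t, x))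
    (x₀ := s) (s := Metric.ball s ε) (bound := K.indicator fun _ => M) (Metric.ball_mem_nhds s hεpos)
    (Filter.Eventually.of_forall fun t =>
      (continuous_slice hsm_f t).aestronglyMeasurable)
    ?_ ((continuous_slice (contDiff_Dv hsm_f tau) s).aestronglyMeasurable) ?_ ?_ ?_
  · exact key.2
  · -- integrability at s
    apply Continuous.integrable_of_hasCompactSupport (continuous_slice hsm_f s)
    apply HasCompactSupport.intro hKc
    intro x hx
    exact ffn_zero_far (by simpa using hs.le) ((hnotK x hx).le)
  · -- bound
    apply Filter.Eventually.of_forall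
    intro x t ht
    by_cases hxK : x ∈ K
    · have h1 : (t, x) ∈ (Set.Icc (s-ε) (s+ε)) ×ˢ K := by
        constructor
        · rw [Metric.mem_ball, Real.dist_eq, abs_lt] at ht
          constructor <;> simp <;> linarith [ht.1, ht.2]
        · exact hxK
      have := hM _ h1
      rwa [Set.indicator_of_mem hxK]
    · rw [Set.indicator_of_notMem hxK]
      have : Dv tau (ffn R u) (t, x) = 0 := Dv_ffn_zero_far R tau (htgt t ht) (hnotK x hxK)
      simp [this]
  · -- bound integrable
    exact (MeasureTheory.integrableOn_const
      hKc.measure_lt_top.ne).integrable_indicator hKm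
  · -- differentiability
    apply Filter.Eventually.of_forall
    intro x t _
    exact hasDerivAt_slice hsm_f t x

lemma integral_Dv_tau_ffn_nonpos (hu : ContDiff ℝ sm u)
    (hwave : ∀ p, Dv tau (Dv tau u) p = ∑ j, Dv (sg j) (Dv (sg j) u) p)
    {R : ℝ} (hR : 0 ≤ R) {s : ℝ} (hs : 0 ≤ s) :
    (∫ x, Dv tau (ffn R u) (s, x)) ≤ 0 := by
  classical
  set K := Metric.closedBall (0:E3) (R+2) with hK
  have hKc : IsCompact K := isCompact_closedBall _ _
  have hnotK : ∀ x : E3, x ∉ K → R + 2 < ‖x‖ := by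
    intro x hx
    simpa [hK, Metric.mem_closedBall, dist_zero_right, not_le] using hx
  set V : E3 → E3 :=
    fun x => (EuclideanSpace.equiv (Fin 3) ℝ).symm (fun j => wG R u j (s, x)) with hV
  have hVj : ∀ (x : E3) (j : Fin 3), V x j = wG R u j (s, x) := fun x j => rfl
  have hVsm : ∀ j, ContDiff ℝ sm fun x => V x j := by
    intro j
    have : (fun x => V x j) = fun x => wG R u j (s, x) := funext fun x => hVj x j
    rw [this]
    exact (contDiff_wG hu R j).comp (contDiff_const.prodMk contDiff_id)
  have hVzero : ∀ x : E3, R + 2 < ‖x‖ → V x = 0 := by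
    intro x hx
    have hw : wfn R (s, x) = 0 := wfn_zero (hfn_nonpos (by simp; linarith) hx.le)
    have : ∀ j, wG R u j (s, x) = 0 := by
      intro j
      simp only [wG_def]
      rw [hw, zero_mul]
    ext j
    simp [hV, this]
  have hdiv : ∀ x, div3 V x = ∑ j, Dv (sg j) (wG R u j) (s, x) := by
    intro x
    rw [div3]
    refine Finset.sum_congr rfl fun j _ => ?_
    have : (fun y => V y j) = fun y => wG R u j (s, y) := funext fun y => hVj y j
    rw [this, pd_slice (contDiff_wG hu R j)]
  set rr : E3 → ℝ := fun x =>
    deriv th (hfn R (s, x)) * ((∑ j, pd j psi x * Gfn u j (s, x)) - efn u (s, x)) with hrr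
  have hkey : ∀ x, Dv tau (ffn R u) (s, x) = div3 V x + rr x := by
    intro x
    rw [key_identity hu hwave R (s, x), hdiv x]
  have hInt1 : MeasureTheory.Integrable (fun x => Dv tau (ffn R u) (s, x)) := by
    apply Continuous.integrable_of_hasCompactSupport
      (continuous_slice (contDiff_Dv (contDiff_ffn hu R) tau) s)
    apply HasCompactSupport.intro hKc
    intro x hx
    exact Dv_ffn_zero_far R tau (by simp; linarith) (hnotK x hx)
  have hIntDiv : MeasureTheory.Integrable (div3 V) := by
    have hcont : Continuous (div3 V) := by
      have : div3 V = fun x => ∑ j, Dv (sg j) (wG R u j) (s, x) := funext hdiv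
      rw [this]
      exact continuous_finset_sum _ fun j _ =>
        continuous_slice (contDiff_Dv (contDiff_wG hu R j) (sg j)) s
    apply hcont.integrable_of_hasCompactSupport
    apply HasCompactSupport.intro hKc
    intro x hx
    exact div3_eq_zero_of_zero_nhds hVzero (hnotK x hx)
  have hIntrr : MeasureTheory.Integrable rr := by
    have : rr = fun x => Dv tau (ffn R u) (s, x) - div3 V x := by
      funext x; rw [hkey x]; ring
    rw [this]
    exact hInt1.sub hIntDiv
  calc (∫ x, Dv tau (ffn R u) (s, x)) = ∫ x, (div3 V x + rr x) := by
        exact MeasureTheory.integral_congr_ae (Filter.Eventually.of_forall hkey)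
    _ = (∫ x, div3 V x) + ∫ x, rr x := MeasureTheory.integral_add hIntDiv hIntrr
    _ = ∫ x, rr x := by
        rw [integral_div3_eq_zero V hVsm (R+2) hVzero (by linarith), zero_add]
    _ ≤ 0 := MeasureTheory.integral_nonpos fun x => remainder_nonpos u R (s, x)

end Energy2

section Uniq

variable {u : ℝ × E3 → ℝ}

lemma integrable_ffn_slice (hu : ContDiff ℝ sm u) (R : ℝ) {s : ℝ} (hs : -1 < s) :
    MeasureTheory.Integrable (fun x => ffn R u (s, x)) := by
  apply Continuous.integrable_of_hasCompactSupport (continuous_slice (contDiff_ffn hu R) s)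
  apply HasCompactSupport.intro (isCompact_closedBall (0:E3) (R+2))
  intro x hx
  have hxn : R + 2 < ‖x‖ := by
    simpa [Metric.mem_closedBall, dist_zero_right, not_le] using hx
  exact ffn_zero_far (by simpa using hs.le) hxn.le

lemma waveUniq_nonneg (hu : ContDiff ℝ sm u)
    (hwave : ∀ p, Dv tau (Dv tau u) p = ∑ j, Dv (sg j) (Dv (sg j) u) p)
    (h0 : ∀ x, u (0, x) = 0) (h1 : ∀ x, Dv tau u (0, x) = 0)
    {T : ℝ} (hT : 0 ≤ T) (x0 : E3) : u (T, x0) = 0 := by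
  classical
  set R := T + psi x0 with hRdef
  have hRpos : 0 ≤ R := by have := (psi_pos x0).le; rw [hRdef]; linarith
  set En : ℝ → ℝ := fun t => ∫ x, ffn R u (t, x) with hEn
  have hffn0 : ∀ x, ffn R u (0, x) = 0 := by
    intro x
    have hσ : ∀ j : Fin 3, Dv (sg j) u (0, x) = 0 := by
      intro j
      rw [← pd_slice hu j 0 x]
      have hfun : (fun y => u (0, y)) = fun _ => (0:ℝ) := funext h0
      rw [pd, hfun]
      simp
    have he : efn u (0, x) = 0 := by
      simp only [efn_def]
      rw [h1 x]
      simp [hσ]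
    simp only [ffn_def]
    rw [he, mul_zero]
  have hEn0 : En 0 = 0 := by
    rw [hEn]
    simp only [hffn0]
    exact MeasureTheory.integral_zero _ _
  have hEnNonneg : ∀ s, 0 ≤ En s := fun s =>
    MeasureTheory.integral_nonneg fun x =>
      mul_nonneg (wfn_nonneg R _) (efn_nonneg u _)
  have hDer : ∀ s : ℝ, -1 < s →
      HasDerivAt En (∫ x, Dv tau (ffn R u) (s, x)) s := fun s hs => hasDerivAt_En hu R hs
  have hconts : ContinuousOn En (Set.Icc 0 T) := fun s hs =>
    ((hDer s (by linarith [hs.1])).continuousAt).continuousWithinAt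
  have hdiffs : DifferentiableOn ℝ En (interior (Set.Icc 0 T)) := by
    intro s hs
    rw [interior_Icc] at hs
    exact ((hDer s (by linarith [hs.1])).differentiableAt).differentiableWithinAt
  have hderiv_nonpos : ∀ s ∈ interior (Set.Icc 0 T), deriv En s ≤ 0 := by
    intro s hs
    rw [interior_Icc] at hs
    rw [(hDer s (by linarith [hs.1])).deriv]
    exact integral_Dv_tau_ffn_nonpos hu hwave hRpos hs.1.le
  have hanti : AntitoneOn En (Set.Icc 0 T) :=
    antitoneOn_of_deriv_nonpos (convex_Icc 0 T) hconts hdiffs hderiv_nonpos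
  have hmem0 : (0:ℝ) ∈ Set.Icc 0 T := ⟨le_rfl, hT⟩
  have hEnzero : ∀ s ∈ Set.Icc 0 T, En s = 0 := by
    intro s hs
    have h2 : En s ≤ En 0 := hanti hmem0 hs hs.1
    rw [hEn0] at h2
    exact le_antisymm h2 (hEnNonneg s)
  have huτ0 : ∀ s ∈ Set.Icc 0 T, Dv tau u (s, x0) = 0 := by
    intro s hs
    have hint := integrable_ffn_slice hu R (show (-1:ℝ) < s by linarith [hs.1])
    have hintz : (∫ x, ffn R u (s, x)) = 0 := by simpa [hEn] using hEnzero s hs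
    have hae := (MeasureTheory.integral_eq_zero_iff_of_nonneg
        (fun x => mul_nonneg (wfn_nonneg R _) (efn_nonneg u _)) hint).1 hintz
    have heq := (Continuous.ae_eq_iff_eq MeasureTheory.volume
        (continuous_slice (contDiff_ffn hu R) s) continuous_zero).1 hae
    have hfx0 : ffn R u (s, x0) = 0 := by
      have := congrFun heq x0
      simpa using this
    have hw1 : wfn R (s, x0) = 1 := by
      apply Real.smoothTransition.one_of_one_le
      simp only [hfn]
      rw [hRdef]
      linarith [hs.2]
    have he0 : efn u (s, x0) = 0 := by
      have : wfn R (s, x0) * efn u (s, x0) = 0 := hfx0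
      rwa [hw1, one_mul] at this
    have hsumnn : (0:ℝ) ≤ ∑ j, Dv (sg j) u (s, x0) ^ 2 :=
      Finset.sum_nonneg fun j _ => sq_nonneg _
    have hdef : Dv tau u (s, x0) ^ 2 + ∑ j, Dv (sg j) u (s, x0) ^ 2 = 0 := he0
    have : Dv tau u (s, x0) ^ 2 = 0 := by nlinarith [sq_nonneg (Dv tau u (s, x0))]
    exact sq_eq_zero_iff.1 this
  set g : ℝ → ℝ := fun t => u (t, x0) with hg
  have hgd : ∀ s : ℝ, HasDerivAt g (Dv tau u (s, x0)) s := fun s => hasDerivAt_slice hu s x0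
  have hgc : ContinuousOn g (Set.Icc 0 T) := fun s _ =>
    (hgd s).continuousAt.continuousWithinAt
  have hgdiff : DifferentiableOn ℝ g (interior (Set.Icc 0 T)) := fun s _ =>
    (hgd s).differentiableAt.differentiableWithinAt
  have hz : ∀ s ∈ interior (Set.Icc 0 T), deriv g s = 0 := by
    intro s hs
    rw [interior_Icc] at hs
    rw [(hgd s).deriv]
    exact huτ0 s ⟨hs.1.le, hs.2.le⟩
  have hganti : AntitoneOn g (Set.Icc 0 T) :=
    antitoneOn_of_deriv_nonpos (convex_Icc 0 T) hgc hgdiff fun s hs => le_of_eq (hz s hs)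
  have hgmono : MonotoneOn g (Set.Icc 0 T) :=
    monotoneOn_of_deriv_nonneg (convex_Icc 0 T) hgc hgdiff fun s hs => ge_of_eq (hz s hs)
  have hmemT : T ∈ Set.Icc 0 T := ⟨hT, le_rfl⟩
  have : g T = g 0 := le_antisymm (hganti hmem0 hmemT hT) (hgmono hmem0 hmemT hT)
  rw [hg] at this
  simpa [h0 x0] using this

end Uniq

section UniqAll

variable {u : ℝ × E3 → ℝ}

lemma Dv_negF {F : ℝ × E3 → ℝ} {v : ℝ × E3} (p : ℝ × E3) :
    Dv v (fun q => -F q) p = -Dv v F p := by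
  simp [Dv, fderiv_neg]

def LRef : ℝ × E3 →L[ℝ] ℝ × E3 :=
  (-(ContinuousLinearMap.fst ℝ ℝ E3)).prod (ContinuousLinearMap.snd ℝ ℝ E3)

lemma LRef_apply (p : ℝ × E3) : LRef p = (-p.1, p.2) := rfl

lemma LRef_tau : LRef tau = -tau := by
  rw [LRef_apply]
  simp [tau, Prod.ext_iff]

lemma LRef_sg (j : Fin 3) : LRef (sg j) = sg j := by
  rw [LRef_apply]
  simp [sg, Prod.ext_iff]

lemma waveUniq_all (hu : ContDiff ℝ sm u)
    (hwave : ∀ p, Dv tau (Dv tau u) p = ∑ j, Dv (sg j) (Dv (sg j) u) p)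
    (h0 : ∀ x, u (0, x) = 0) (h1 : ∀ x, Dv tau u (0, x) = 0)
    (t : ℝ) (x : E3) : u (t, x) = 0 := by
  rcases le_or_gt 0 t with ht | ht
  · exact waveUniq_nonneg hu hwave h0 h1 ht x
  · -- reflect time
    set v : ℝ × E3 → ℝ := u ∘ LRef with hv
    have hvc : ContDiff ℝ sm v := hu.comp LRef.contDiff
    have hvτ : Dv tau v = (fun q => -(Dv tau u q)) ∘ LRef := by
      funext p
      rw [hv, Dv_comp_clm hu LRef p, LRef_tau, Dv_neg]
      rfl
    have hvσ : ∀ j, Dv (sg j) v = (Dv (sg j) u) ∘ LRef := by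
      intro j
      funext p
      rw [hv, Dv_comp_clm hu LRef p, LRef_sg]
      rfl
    have hwv : ∀ p, Dv tau (Dv tau v) p = ∑ j, Dv (sg j) (Dv (sg j) v) p := by
      intro p
      have hτ2 : Dv tau (Dv tau v) p = Dv tau (Dv tau u) (LRef p) := by
        rw [hvτ, Dv_comp_clm ((contDiff_Dv hu tau).neg) LRef p, LRef_tau, Dv_neg,
          Dv_negF]
        ring
      have hσ2 : ∀ j, Dv (sg j) (Dv (sg j) v) p = Dv (sg j) (Dv (sg j) u) (LRef p) := by
        intro j
        rw [hvσ j, Dv_comp_clm (contDiff_Dv hu (sg j)) LRef p, LRef_sg]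
      rw [hτ2, hwave (LRef p)]
      exact (Finset.sum_congr rfl fun j _ => (hσ2 j).symm)
    have h0v : ∀ y, v (0, y) = 0 := by
      intro y
      have : LRef (0, y) = ((0:ℝ), y) := by
        rw [LRef_apply]; simp
      rw [hv, Function.comp_apply, this, h0 y]
    have h1v : ∀ y, Dv tau v (0, y) = 0 := by
      intro y
      rw [hvτ, Function.comp_apply]
      have : LRef ((0:ℝ), y) = ((0:ℝ), y) := by rw [LRef_apply]; simp
      rw [this, h1 y, neg_zero]
    have := waveUniq_nonneg hvc hwv h0v h1v (T := -t) (by linarith) x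
    have hL : LRef (-t, x) = (t, x) := by rw [LRef_apply]; simp
    rw [hv, Function.comp_apply, hL] at this
    exact this

end UniqAll


end S10

section
open S10

/-- **propagation of the divergence-free constraint.** If
`A : ℝ × ℝ³ → ℝ³` is a smooth solution of `∂_t² A = ΔA`, compactly supported in space,
with `div A(0,·) = 0` and `div ∂_t A(0,·) = 0`, then `div A(t,·) = 0` for all `t`. -/
theorem stmt10_constraint_propagation
    (A : ℝ → E3 → E3) (hA : ContDiff ℝ (⊤ : ℕ∞) (fun p : ℝ × E3 => A p.1 p.2))
    (hsupp : ∀ t, HasCompactSupport (A t))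
    (hwave : ∀ t x i, deriv (fun s => deriv (fun s' => A s' x i) s) t
        = ∑ j : Fin 3, pd j (fun y => pd j (fun z => A t z i) y) x)
    (hdiv0 : ∀ x, div3 (A 0) x = 0)
    (hdiv0' : ∀ x, div3 (fun y => (EuclideanSpace.equiv (Fin 3) ℝ).symm
        (fun i => deriv (fun s => A s y i) 0)) x = 0) :
    ∀ t x, div3 (A t) x = 0 := by
  classical
  set Fi : Fin 3 → (ℝ × E3 → ℝ) := fun i p => A p.1 p.2 i with hFidef
  have hFi : ∀ i, ContDiff ℝ sm (Fi i) := by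
    intro i
    exact (EuclideanSpace.proj i : E3 →L[ℝ] ℝ).contDiff.comp (hA.of_le (by simp))
  set U : ℝ × E3 → ℝ := fun p => ∑ i, Dv (sg i) (Fi i) p with hUdef
  have hU : ContDiff ℝ sm U := ContDiff.sum fun i _ => contDiff_Dv (hFi i) (sg i)
  have hdiv_eq : ∀ t x, div3 (A t) x = U (t, x) := by
    intro t x
    rw [div3, hUdef]
    exact Finset.sum_congr rfl fun i _ => pd_slice (hFi i) i t x
  -- wave equation for each component
  have hwFi : ∀ (i : Fin 3) (p : ℝ × E3),
      Dv tau (Dv tau (Fi i)) p = ∑ j, Dv (sg j) (Dv (sg j) (Fi i)) p := by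
    intro i p
    obtain ⟨t, x⟩ := p
    have h := hwave t x i
    have l1 : (fun s => deriv (fun s' => A s' x i) s) = fun s => Dv tau (Fi i) (s, x) :=
      funext fun s => deriv_slice (hFi i) s x
    rw [l1, deriv_slice (contDiff_Dv (hFi i) tau) t x] at h
    have l2 : ∀ j, pd j (fun y => pd j (fun z => A t z i) y) x
        = Dv (sg j) (Dv (sg j) (Fi i)) (t, x) := by
      intro j
      have l3 : (fun y => pd j (fun z => A t z i) y) = fun y => Dv (sg j) (Fi i) (t, y) :=
        funext fun y => pd_slice (hFi i) j t y
      rw [l3, pd_slice (contDiff_Dv (hFi i) (sg j)) j t x]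
    rw [Finset.sum_congr rfl (fun j _ => l2 j)] at h
    exact h
  -- wave equation for U
  have hUτ : Dv tau U = fun p => ∑ i, Dv (sg i) (Dv tau (Fi i)) p := by
    funext p
    rw [hUdef, Dv_sum Finset.univ _ (fun i => contDiff_Dv (hFi i) (sg i)) p]
    exact Finset.sum_congr rfl fun i _ => congrFun (Dv_comm (hFi i)) p
  have hwU : ∀ p, Dv tau (Dv tau U) p = ∑ j, Dv (sg j) (Dv (sg j) U) p := by
    intro p
    have lhs1 : Dv tau (Dv tau U) p
        = ∑ i, Dv (sg i) (Dv tau (Dv tau (Fi i))) p := by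
      rw [hUτ, Dv_sum Finset.univ _
        (fun i => contDiff_Dv (contDiff_Dv (hFi i) tau) (sg i)) p]
      exact Finset.sum_congr rfl fun i _ =>
        congrFun (Dv_comm (contDiff_Dv (hFi i) tau)) p
    have lhs2 : ∀ i, Dv (sg i) (Dv tau (Dv tau (Fi i))) p
        = ∑ j, Dv (sg i) (Dv (sg j) (Dv (sg j) (Fi i))) p := by
      intro i
      have hfe : Dv tau (Dv tau (Fi i))
          = fun q => ∑ j, Dv (sg j) (Dv (sg j) (Fi i)) q := funext (hwFi i)
      rw [hfe, Dv_sum Finset.univ _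
        (fun j => contDiff_Dv (contDiff_Dv (hFi i) (sg j)) (sg j)) p]
    have rhs1 : ∀ j, Dv (sg j) (Dv (sg j) U) p
        = ∑ i, Dv (sg j) (Dv (sg j) (Dv (sg i) (Fi i))) p := by
      intro j
      have hUσ : Dv (sg j) U = fun q => ∑ i, Dv (sg j) (Dv (sg i) (Fi i)) q := by
        funext q
        rw [hUdef, Dv_sum Finset.univ _ (fun i => contDiff_Dv (hFi i) (sg i)) q]
      rw [hUσ, Dv_sum Finset.univ _
        (fun i => contDiff_Dv (contDiff_Dv (hFi i) (sg i)) (sg j)) p]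
    have swap : ∀ i j, Dv (sg i) (Dv (sg j) (Dv (sg j) (Fi i))) p
        = Dv (sg j) (Dv (sg j) (Dv (sg i) (Fi i))) p := by
      intro i j
      have s1 : Dv (sg j) (Dv (sg i) (Fi i)) = Dv (sg i) (Dv (sg j) (Fi i)) :=
        Dv_comm (hFi i)
      have s2 : Dv (sg i) (Dv (sg j) (Dv (sg j) (Fi i)))
          = Dv (sg j) (Dv (sg i) (Dv (sg j) (Fi i))) :=
        Dv_comm (contDiff_Dv (hFi i) (sg j))
      rw [s2]
      exact congrFun (congrArg (Dv (sg j)) s1.symm) p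
    rw [lhs1]
    rw [Finset.sum_congr rfl fun i _ => lhs2 i]
    rw [Finset.sum_comm]
    rw [Finset.sum_congr rfl fun j _ => (rhs1 j)]
    exact Finset.sum_congr rfl fun j _ =>
      Finset.sum_congr rfl fun i _ => swap i j
  -- initial conditions
  have h0U : ∀ x, U (0, x) = 0 := by
    intro x
    rw [← hdiv_eq 0 x]
    exact hdiv0 x
  have h1U : ∀ x, Dv tau U (0, x) = 0 := by
    intro x
    have h := hdiv0' x
    rw [div3] at h
    have hconv : ∀ i : Fin 3, pd i (fun y => ((EuclideanSpace.equiv (Fin 3) ℝ).symm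
        (fun i => deriv (fun s => A s y i) 0)) i) x
        = Dv (sg i) (Dv tau (Fi i)) (0, x) := by
      intro i
      have hfun : (fun y => ((EuclideanSpace.equiv (Fin 3) ℝ).symm
          (fun i => deriv (fun s => A s y i) 0)) i)
          = fun y => Dv tau (Fi i) (0, y) := by
        funext y
        have : ((EuclideanSpace.equiv (Fin 3) ℝ).symm
            (fun i => deriv (fun s => A s y i) 0)) i
            = deriv (fun s => A s y i) 0 := rfl
        rw [this]
        exact deriv_slice (hFi i) 0 y
      rw [hfun, pd_slice (contDiff_Dv (hFi i) tau) i 0 x]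
    rw [Finset.sum_congr rfl fun i _ => hconv i] at h
    rw [congrFun hUτ (0, x)]
    exact h
  intro t x
  rw [hdiv_eq t x]
  exact waveUniq_all hU hwU h0U h1U t x

end

end
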